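/- Let q be a prime power, let 0 < k', k ≤ n, let A be an invertible n×n matrix over F_q, and let R = rs([ I_{k'} | 0 ]·A) be the k'-dimensional subspace obtained by applying v ↦ vA to the row space of [ I_{k'} | 0 ]. Let τ satisfy |k − k'| ≤ τ < min(k' + k, 2n − (k' + k)) with (k + k' − τ)/2 ∈ ℤ. Then for every k×n matrix V over F_q of rank k, d_S(R, rs(V)) ≤ τ if and only if M_{i₁,…,i_k}(V·A⁻¹) = 0 for every index tuple (i₁ < … < i_k) that is NOT ⪯ ((k'−k+τ)/2 + 1, …, k', n − (k−k'+τ)/2 + 1, …, n) in the Bruhat order. -/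

import Mathlib

/-!
Multiplying by `A⁻¹` carries `R` to `U₀ = rs [I_{k'} | 0]` and `rs V` to `rs W`, `W = V A⁻¹`,
without changing any dimension. `U₀` is the kernel of the projection onto the coordinates
`j ≥ k'`, so by rank–nullity `dim (U₀ ∩ rs W) = k - r`, where `r` is the rank of the columns
`j ≥ k'` of `W`; by parity, `d_S ≤ τ` becomes `r ≤ (k - k' + τ) / 2`. Since the columns of `W`
span `F^k`, `r` is the largest number of columns `j ≥ k'` in a set of `k` independent columns,
that is, among the columns of a nonvanishing maximal minor; this is the Bruhat condition.
-/

/-- The standard subspace `U₀ = rs [I_{k'} | 0]`, spanned by the first `k'`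
standard basis vectors of `F^n`. -/
def stdSubspace (F : Type*) [Field F] (n k' : ℕ) (h : k' ≤ n) :
    Submodule F (Fin n → F) :=
  Submodule.span F
    (Set.range fun i : Fin k' => (Pi.single (Fin.castLE h i) (1 : F) : Fin n → F))

def rowSpace (F : Type*) [Field F] {k n : ℕ} (M : Matrix (Fin k) (Fin n) F) :
    Submodule F (Fin n → F) :=
  Submodule.span F (Set.range fun i : Fin k => M i)

open Module Submodule Set

section LinearIndepOn

variable {F ι E : Type*} [Field F] [AddCommGroup E] [Module F E] {v : ι → E}

theorem LinearIndepOn.finrank_span_image_eq_card {T : Finset ι}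
    (h : LinearIndepOn F v (T : Set ι)) : finrank F (span F (v '' T)) = T.card := by
  rw [image_eq_range, finrank_span_eq_card h]
  simp

variable [FiniteDimensional F E] (p : ι → Prop) [DecidablePred p]

theorem LinearIndepOn.card_filter_le_finrank_span {B : Finset ι}
    (h : LinearIndepOn F v (B : Set ι)) :
    (B.filter p).card ≤ finrank F (span F (v '' {i | p i})) := by
  have hBp : LinearIndepOn F v ((B.filter p : Finset ι) : Set ι) :=
    h.mono (Finset.coe_subset.mpr (Finset.filter_subset p B))
  rw [← hBp.finrank_span_image_eq_card]
  exact finrank_mono (span_mono (image_mono fun i hi => (Finset.mem_filter.mp hi).2))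

/-- Extend a maximal independent subfamily of `v` on `{i | p i}` to a basis drawn from `v`. -/
theorem exists_linearIndepOn_card_eq_finrank [Finite ι] (hv : span F (range v) = ⊤) :
    ∃ B : Finset ι, LinearIndepOn F v (B : Set ι) ∧ B.card = finrank F E ∧
      finrank F (span F (v '' {i | p i})) ≤ (B.filter p).card := by
  obtain ⟨b, hbp, -, hspan_b, hb⟩ :=
    exists_linearIndepOn_extension (linearIndepOn_empty F v) (empty_subset {i | p i})
  obtain ⟨B, -, hbB, hspan_B, hB⟩ := exists_linearIndepOn_extension hb (subset_univ b)
  obtain ⟨b, rfl⟩ := (toFinite b).exists_finset_coe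
  obtain ⟨B, rfl⟩ := (toFinite B).exists_finset_coe
  refine ⟨B, hB, ?_, ?_⟩
  · have hB_top : span F (v '' B) = ⊤ := by
      rw [eq_top_iff, ← hv, ← image_univ]
      exact span_le.mpr hspan_B
    rw [← hB.finrank_span_image_eq_card, hB_top, finrank_top]
  · calc finrank F (span F (v '' {i | p i}))
        ≤ finrank F (span F (v '' b)) := finrank_mono (span_le.mpr hspan_b)
      _ = b.card := hb.finrank_span_image_eq_card
      _ ≤ (B.filter p).card := Finset.card_le_card fun i hi =>
          Finset.mem_filter.mpr ⟨Finset.coe_subset.mp hbB hi, hbp hi⟩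

/-- The rank of `{v i | p i}` is the largest number of indices satisfying `p` in a basis drawn
from `v`: the rank function of the linear matroid of `v`. -/
theorem finrank_span_image_le_iff [Finite ι] (hv : span F (range v) = ⊤) (t : ℕ) :
    finrank F (span F (v '' {i | p i})) ≤ t ↔
      ∀ B : Finset ι, LinearIndepOn F v (B : Set ι) → B.card = finrank F E →
        (B.filter p).card ≤ t := by
  constructor
  · exact fun ht B hB _ => (hB.card_filter_le_finrank_span p).trans ht
  · intro h
    obtain ⟨B, hB, hcard, hle⟩ := exists_linearIndepOn_card_eq_finrank p hv
    exact hle.trans (h B hB hcard)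

end LinearIndepOn

section Finrank

variable {F M N : Type*} [Field F] [AddCommGroup M] [Module F M] [AddCommGroup N] [Module F N]

theorem Submodule.finrank_map_of_injective {f : M →ₗ[F] N} (hf : Function.Injective f)
    (U : Submodule F M) : finrank F (U.map f) = finrank F U :=
  (equivMapOfInjective f hf U).finrank_eq.symm

theorem Submodule.finrank_inf_ker_add_finrank_map [FiniteDimensional F M] (U : Submodule F M)
    (f : M →ₗ[F] N) : finrank F ↥(U ⊓ LinearMap.ker f) + finrank F (U.map f) = finrank F U := by
  have h := LinearMap.finrank_range_add_finrank_ker (f.domRestrict U)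
  rw [LinearMap.range_domRestrict, LinearMap.ker_domRestrict, ← finrank_map_subtype_eq,
    map_comap_subtype] at h
  omega

end Finrank

theorem Finset.card_filter_univ_comp {α β : Type*} [Fintype α] (c : α ↪ β) (p : β → Prop)
    [DecidablePred p] :
    (univ.filter fun a => p (c a)).card = ((univ.map c).filter p).card := by
  rw [filter_map, card_map]
  rfl

namespace Matrix

variable {F : Type*} [Field F]

theorem det_submatrix_ne_zero_iff {m ι : Type*} [Fintype m] [DecidableEq m] (W : Matrix m ι F)
    (c : m → ι) : (W.submatrix id c).det ≠ 0 ↔ LinearIndependent F (W.col ∘ c) := by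
  rw [← isUnit_iff_ne_zero, ← isUnit_iff_isUnit_det, ← linearIndependent_cols_iff_isUnit]
  rfl

variable {k n : ℕ} (W : Matrix (Fin k) (Fin n) F) (p : Fin n → Prop) [DecidablePred p] (t : ℕ)

/-- A strictly increasing `c` is the same as the `k`-set `B = range c` of columns. -/
theorem forall_det_submatrix_eq_zero_iff :
    (∀ c : Fin k → Fin n, StrictMono c →
        t + 1 ≤ (Finset.univ.filter fun l => p (c l)).card → (W.submatrix id c).det = 0) ↔
      ∀ B : Finset (Fin n), LinearIndepOn F W.col (B : Set (Fin n)) → B.card = k →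
        (B.filter p).card ≤ t := by
  constructor
  · intro h B hB hcard
    by_contra! hlt
    set c := B.orderEmbOfFin hcard
    refine (det_submatrix_ne_zero_iff W c).mpr ?_ (h c c.strictMono ?_)
    · rw [← linearIndepOn_range_iff c.injective, Finset.range_orderEmbOfFin]
      exact hB
    · have hcount := Finset.card_filter_univ_comp c.toEmbedding p
      rw [Finset.map_orderEmbOfFin_univ] at hcount
      exact hlt.trans_eq hcount.symm
  · intro h c hc hcard
    by_contra hdet
    set e : Fin k ↪ Fin n := ⟨c, hc.injective⟩
    have hindep : LinearIndepOn F W.col ((Finset.univ.map e : Finset (Fin n)) : Set (Fin n)) := by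
      rw [Finset.coe_map, Finset.coe_univ, image_univ, linearIndepOn_range_iff e.injective]
      exact (det_submatrix_ne_zero_iff W c).mp hdet
    have hcount := (Finset.card_filter_univ_comp e p).trans_le (h _ hindep (by simp))
    exact absurd hcount (not_le.mpr hcard)

theorem rank_submatrix_subtype_le_iff (hW : W.rank = k) :
    (W.submatrix id ((↑) : {j // p j} → Fin n)).rank ≤ t ↔
      ∀ c : Fin k → Fin n, StrictMono c →
        t + 1 ≤ (Finset.univ.filter fun l => p (c l)).card → (W.submatrix id c).det = 0 := by
  have hspan : span F (range W.col) = ⊤ := by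
    refine eq_top_of_finrank_eq ?_
    rw [← rank_eq_finrank_span_cols, hW, finrank_fin_fun]
  have hcols : range (W.submatrix id ((↑) : {j // p j} → Fin n)).col = W.col '' {j | p j} := by
    change range (W.col ∘ Subtype.val) = _
    rw [range_comp, Subtype.range_coe_subtype]
  rw [forall_det_submatrix_eq_zero_iff, rank_eq_finrank_span_cols, hcols,
    finrank_span_image_le_iff p hspan, finrank_fin_fun]

end Matrix

section RowSpace

variable {F : Type*} [Field F]

theorem stdSubspace_eq_ker {n k' : ℕ} (h : k' ≤ n) :
    stdSubspace F n k' h =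
      LinearMap.ker (LinearMap.funLeft F F ((↑) : {j : Fin n // k' ≤ (j : ℕ)} → Fin n)) := by
  refine le_antisymm (span_le.mpr ?_) fun v hv => ?_
  · rintro _ ⟨i, rfl⟩
    ext ⟨j, hj⟩
    have hij : j ≠ Fin.castLE h i := fun hji => by
      have := congrArg Fin.val hji
      simp only [Fin.val_castLE] at this
      omega
    simp [LinearMap.funLeft_apply, hij]
  · rw [← Finset.univ_sum_single v]
    refine sum_mem fun j _ => ?_
    by_cases hj : k' ≤ (j : ℕ)
    · rw [show v j = 0 from congrFun hv ⟨j, hj⟩, Pi.single_zero]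
      exact zero_mem _
    · have hsingle :
          Pi.single j (v j) = v j • Pi.single (Fin.castLE h ⟨j, by omega⟩) (1 : F) := by
        rw [← Pi.single_smul', smul_eq_mul, mul_one]
        rfl
      rw [hsingle]
      exact smul_mem _ _ (subset_span ⟨_, rfl⟩)

theorem finrank_stdSubspace {n k' : ℕ} (h : k' ≤ n) : finrank F (stdSubspace F n k' h) = k' := by
  have hli := (Pi.basisFun F (Fin n)).linearIndependent.comp _ (Fin.castLE_injective h)
  simp only [Function.comp_def, Pi.basisFun_apply] at hli
  rw [stdSubspace, finrank_span_eq_card hli, Fintype.card_fin]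

variable {k n : ℕ}

theorem finrank_rowSpace (M : Matrix (Fin k) (Fin n) F) : finrank F (rowSpace F M) = M.rank :=
  M.rank_eq_finrank_span_row.symm

theorem rowSpace_mul (M : Matrix (Fin k) (Fin n) F) (A : Matrix (Fin n) (Fin n) F) :
    rowSpace F (M * A) = (rowSpace F M).map A.vecMulLinear := by
  rw [rowSpace, rowSpace, map_span, ← range_comp]
  rfl

theorem map_funLeft_rowSpace {m : Type*} (M : Matrix (Fin k) (Fin n) F) (f : m → Fin n) :
    (rowSpace F M).map (LinearMap.funLeft F F f) = span F (range (M.submatrix id f).row) := by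
  rw [rowSpace, map_span, ← range_comp]
  rfl

theorem finrank_stdSubspace_inf_rowSpace_add_rank {k' : ℕ} (h : k' ≤ n)
    (W : Matrix (Fin k) (Fin n) F) :
    finrank F ↥(stdSubspace F n k' h ⊓ rowSpace F W) +
        (W.submatrix id ((↑) : {j : Fin n // k' ≤ (j : ℕ)} → Fin n)).rank = W.rank := by
  rw [inf_comm, stdSubspace_eq_ker, (W.submatrix _ _).rank_eq_finrank_span_row,
    ← map_funLeft_rowSpace, ← finrank_rowSpace]
  exact finrank_inf_ker_add_finrank_map _ _

end RowSpace

theorem statement11_general (F : Type*) [Field F] (n k k' τ : ℕ)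
    (hk'n : k' ≤ n)
    (A : Matrix (Fin n) (Fin n) F) (hA : IsUnit A)
    (hτ2 : (k' : ℤ) - (k : ℤ) ≤ (τ : ℤ))
    (hpar : Even ((k : ℤ) + (k' : ℤ) - (τ : ℤ)))
    (V : Matrix (Fin k) (Fin n) F) (hV : V.rank = k) :
    ((Module.finrank F ↥((stdSubspace F n k' hk'n).map A.vecMulLinear) : ℤ)
        + Module.finrank F ↥(rowSpace F V)
        - 2 * Module.finrank F
            ↥((stdSubspace F n k' hk'n).map A.vecMulLinear ⊓ rowSpace F V)
      ≤ (τ : ℤ))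
    ↔ ∀ c : Fin k → Fin n, StrictMono c →
        (k + τ - k') / 2 + 1 ≤
          (Finset.univ.filter fun l : Fin k => k' ≤ (c l : ℕ)).card →
        ((V * A⁻¹).submatrix id c).det = 0 := by
  have hAdet : IsUnit A.det := (Matrix.isUnit_iff_isUnit_det A).mp hA
  set W := V * A⁻¹
  have hVW : V = W * A := (Matrix.nonsing_inv_mul_cancel_right A V hAdet).symm
  have hW : W.rank = k := by
    rw [Matrix.rank_mul_eq_left_of_isUnit_det _ _ (Matrix.isUnit_nonsing_inv_det A hAdet), hV]
  have hinj : Function.Injective A.vecMulLinear := Matrix.vecMul_injective_iff_isUnit.mpr hA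
  have hdim := finrank_stdSubspace_inf_rowSpace_add_rank hk'n W
  rw [← W.rank_submatrix_subtype_le_iff (fun j : Fin n => k' ≤ (j : ℕ)) _ hW, hVW, rowSpace_mul,
    ← map_inf _ hinj, finrank_map_of_injective hinj, finrank_map_of_injective hinj,
    finrank_map_of_injective hinj, finrank_stdSubspace, finrank_rowSpace, hW]
  obtain ⟨m, hm⟩ := hpar
  omega

/-- For an invertible matrix `A` and `R = rs([I_{k'} | 0]·A)`, with
`|k-k'| ≤ τ < min(k'+k, 2n-(k'+k))` and `k+k'-τ` even, a rank-`k` matrix `V`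
satisfies `d_S(R, rs V) ≤ τ` iff `M_{i₁,…,i_k}(V·A⁻¹) = 0` for every strictly
increasing tuple which is not
`⪯ ((k'-k+τ)/2+1, …, k', n-(k-k'+τ)/2+1, …, n)` in the Bruhat order
(equivalently, whose column set contains at least `(k-k'+τ)/2 + 1` indices
greater than `k'`). -/
theorem statement11 (F : Type*) [Field F] [Fintype F] (n k k' τ : ℕ)
    (hk : 0 < k) (hk' : 0 < k') (hkn : k ≤ n) (hk'n : k' ≤ n)
    (A : Matrix (Fin n) (Fin n) F) (hA : IsUnit A)
    (hτ1 : (k : ℤ) - (k' : ℤ) ≤ (τ : ℤ)) (hτ2 : (k' : ℤ) - (k : ℤ) ≤ (τ : ℤ))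
    (hτ3 : (τ : ℤ) < min ((k' : ℤ) + (k : ℤ)) (2 * (n : ℤ) - ((k' : ℤ) + (k : ℤ))))
    (hpar : Even ((k : ℤ) + (k' : ℤ) - (τ : ℤ)))
    (V : Matrix (Fin k) (Fin n) F) (hV : V.rank = k) :
    ((Module.finrank F ↥((stdSubspace F n k' hk'n).map A.vecMulLinear) : ℤ)
        + Module.finrank F ↥(rowSpace F V)
        - 2 * Module.finrank F
            ↥((stdSubspace F n k' hk'n).map A.vecMulLinear ⊓ rowSpace F V)
      ≤ (τ : ℤ))
    ↔ ∀ c : Fin k → Fin n, StrictMono c →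
        (k + τ - k') / 2 + 1 ≤
          (Finset.univ.filter fun l : Fin k => k' ≤ (c l : ℕ)).card →
        ((V * A⁻¹).submatrix id c).det = 0 :=
  statement11_general F n k k' τ hk'n A hA hτ2 hpar V hV
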